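/- The Core logic sequent calculus is consistent in the sense that the empty sequent ⊢ ∅ (absurdity from no premises) is not derivable. -/
import Mathlib


inductive Form : Type where
  | var : Nat → Form
  | neg : Form → Form
  | conj : Form → Form → Form
  | disj : Form → Form → Form
  | imp : Form → Form → Form
deriving DecidableEq

open Form

/-- Sequent calculus for propositional Core logic (Tennant).
Contexts are finite sets of formulas; the conclusion is `some C` or `none`
(the empty / absurdity conclusion ⊥). -/
inductive Core : Finset Form → Option Form → Prop where
  | ax (A : Form) : Core {A} (some A)
  | lneg {Δ : Finset Form} {A : Form} :
      Core Δ (some A) → Core (insert (Form.neg A) Δ) none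
  | rneg {Δ : Finset Form} {A : Form} :
      Core (insert A Δ) none → Core Δ (some (Form.neg A))
  | landL {Δ : Finset Form} {x : Option Form} (A B : Form) :
      Core Δ x → (Δ ∩ {A, B}).Nonempty →
      Core (insert (Form.conj A B) (Δ \ {A, B})) x
  | randR {Δ Γ : Finset Form} {A B : Form} :
      Core Δ (some A) → Core Γ (some B) → Core (Δ ∪ Γ) (some (Form.conj A B))
  | lor {Δ Γ : Finset Form} {A B : Form} {x y z : Option Form} :
      Core (insert A Δ) x → Core (insert B Γ) y →
      ((x = z ∧ (y = z ∨ y = none)) ∨ (y = z ∧ x = none)) →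
      Core (insert (Form.disj A B) (Δ ∪ Γ)) z
  | ror1 {Δ : Finset Form} {A : Form} (B : Form) :
      Core Δ (some A) → Core Δ (some (Form.disj A B))
  | ror2 {Δ : Finset Form} {B : Form} (A : Form) :
      Core Δ (some B) → Core Δ (some (Form.disj A B))
  | limp {Δ Γ : Finset Form} {A B : Form} {x : Option Form} :
      Core Δ (some A) → Core (insert B Γ) x →
      Core (insert (Form.imp A B) (Δ ∪ Γ)) x
  | rimpa {Δ : Finset Form} {A : Form} (B : Form) :
      Core (insert A Δ) none → Core Δ (some (Form.imp A B))
  | rimpb {Δ : Finset Form} {B : Form} (A : Form) :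
      Core Δ (some B) → Core (Δ \ {A}) (some (Form.imp A B))

def Form.eval (v : Nat → Prop) : Form → Prop
  | var n => v n
  | neg A => ¬ A.eval v
  | conj A B => A.eval v ∧ B.eval v
  | disj A B => A.eval v ∨ B.eval v
  | imp A B => A.eval v → B.eval v

def evalO (v : Nat → Prop) : Option Form → Prop
  | none => False
  | some A => A.eval v

theorem core_sound {Δ : Finset Form} {x : Option Form} (h : Core Δ x)
    (v : Nat → Prop) (hΔ : ∀ A ∈ Δ, A.eval v) : evalO v x := by
  induction h with
  | ax A => exact hΔ A (Finset.mem_singleton_self A)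
  | lneg _ ih =>
      exact (hΔ _ (Finset.mem_insert_self _ _))
        (ih fun A hA => hΔ A (Finset.mem_insert_of_mem hA))
  | rneg _ ih =>
      intro hA
      exact ih fun B hB => by
        rcases Finset.mem_insert.1 hB with h | h
        · subst h; exact hA
        · exact hΔ B h
  | landL A B _ _ ih =>
      have hc : (Form.conj A B).eval v := hΔ _ (Finset.mem_insert_self _ _)
      refine ih fun C hC => ?_
      by_cases hmem : C ∈ ({A, B} : Finset Form)
      · rcases Finset.mem_insert.1 hmem with h | h
        · subst h; exact hc.1
        · rw [Finset.mem_singleton.1 h]; exact hc.2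
      · exact hΔ C (Finset.mem_insert_of_mem (Finset.mem_sdiff.2 ⟨hC, hmem⟩))
  | randR _ _ ih1 ih2 =>
      exact ⟨ih1 fun A hA => hΔ A (Finset.mem_union_left _ hA),
             ih2 fun A hA => hΔ A (Finset.mem_union_right _ hA)⟩
  | lor _ _ hxy ih1 ih2 =>
      have hd := hΔ _ (Finset.mem_insert_self _ _)
      have h2 := fun hC => ih2 (fun B hB => by
        rcases Finset.mem_insert.1 hB with h | h
        · subst h; exact hC
        · exact hΔ B (Finset.mem_insert_of_mem (Finset.mem_union_right _ h)))
      rcases hd with hA | hB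
      · have := ih1 (fun B hB => by
          rcases Finset.mem_insert.1 hB with h | h
          · subst h; exact hA
          · exact hΔ B (Finset.mem_insert_of_mem (Finset.mem_union_left _ h)))
        rcases hxy with ⟨rfl, _⟩ | ⟨_, rfl⟩
        · exact this
        · exact absurd this id
      · have := h2 hB
        rcases hxy with ⟨rfl, rfl | rfl⟩ | ⟨rfl, _⟩
        · exact this
        · exact absurd this id
        · exact this
  | ror1 B _ ih => exact Or.inl (ih hΔ)
  | ror2 A _ ih => exact Or.inr (ih hΔ)
  | limp _ _ ih1 ih2 =>
      have himp := hΔ _ (Finset.mem_insert_self _ _)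
      have hA := ih1 fun C hC =>
        hΔ C (Finset.mem_insert_of_mem (Finset.mem_union_left _ hC))
      exact ih2 fun C hC => by
        rcases Finset.mem_insert.1 hC with h | h
        · subst h; exact himp hA
        · exact hΔ C (Finset.mem_insert_of_mem (Finset.mem_union_right _ h))
  | rimpa B _ ih =>
      intro hA
      exact absurd (ih fun C hC => by
        rcases Finset.mem_insert.1 hC with h | h
        · subst h; exact hA
        · exact hΔ C h) id
  | rimpb A _ ih =>
      intro hA
      exact ih fun C hC => by
        by_cases h : C = A
        · subst h; exact hA
        · exact hΔ C (Finset.mem_sdiff.2 ⟨hC, by simpa using h⟩)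

/-- the empty sequent ⊢ ∅ is not Core-derivable. -/
theorem core_consistent : ¬ Core (∅ : Finset Form) none := fun h =>
  core_sound h (fun _ => True) (fun A hA => absurd hA (Finset.notMem_empty A))
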